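/- Geometric measure of two-qubit Bell diagonal states: let ρ = Σ_{j=0}^3 p_j |Ψ_j⟩⟨Ψ_j| where p_0 ≥ p_1 ≥ p_2 ≥ p_3 ≥ 0, Σ_j p_j = 1, and |Ψ_0⟩, |Ψ_1⟩ = (|00⟩ ± |11⟩)/√2, |Ψ_2⟩, |Ψ_3⟩ = (|01⟩ ± |10⟩)/√2 are the Bell basis states. Then Λ²(ρ) = (p_0 + p_1)/2, i.e., G(ρ) = 1 − log₂(p_0 + p_1), and the maximum is attained at the product vector |00⟩. -/

import Mathlib

open scoped BigOperators ComplexOrder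

namespace Paper

/-- `a` is an ℓ²-normalized (unit) vector. -/
def IsUnitVec {n : Type*} [Fintype n] (a : n → ℂ) : Prop :=
  ∑ x, ‖a x‖ ^ 2 = 1

/-- A density matrix: positive semidefinite with trace 1. -/
def IsDensityMatrix {n : Type*} [Fintype n] (ρ : Matrix n n ℂ) : Prop :=
  ρ.PosSemidef ∧ ρ.trace = 1

/-- ⟨φ|ρ|φ⟩ (its real part). -/
noncomputable def overlap {n : Type*} [Fintype n] (ρ : Matrix n n ℂ) (φ : n → ℂ) : ℝ :=
  (dotProduct (star φ) (ρ.mulVec φ)).re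

/-- The bipartite product vector a ⊗ b. -/
def biProd {α β : Type*} (a : α → ℂ) (b : β → ℂ) : α × β → ℂ :=
  fun p => a p.1 * b p.2

/-- Λ²(ρ) for a bipartite state: maximal overlap with product vectors. -/
noncomputable def biMaxOverlap {α β : Type*} [Fintype α] [Fintype β]
    (ρ : Matrix (α × β) (α × β) ℂ) : ℝ :=
  sSup {r : ℝ | ∃ (a : α → ℂ) (b : β → ℂ), IsUnitVec a ∧ IsUnitVec b ∧
    r = overlap ρ (biProd a b)}

/-- The geometric measure G(ρ) = −log₂ Λ²(ρ) of a bipartite state. -/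
noncomputable def biGm {α β : Type*} [Fintype α] [Fintype β]
    (ρ : Matrix (α × β) (α × β) ℂ) : ℝ :=
  -Real.logb 2 (biMaxOverlap ρ)

/-- The outer product |ψ⟩⟨ψ|. -/
def outer {n : Type*} (ψ : n → ℂ) : Matrix n n ℂ :=
  fun i i' => ψ i * starRingEnd ℂ (ψ i')

/-- The standard basis vector |x⟩. -/
def basisVec {n : Type*} [DecidableEq n] (x : n) : n → ℂ :=
  fun y => if y = x then 1 else 0

/-- |Ψ₀⟩ = (|00⟩ + |11⟩)/√2. -/
noncomputable def bell0 : Fin 2 × Fin 2 → ℂ := fun p =>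
  if p.1 = p.2 then ((1 / Real.sqrt 2 : ℝ) : ℂ) else 0

/-- |Ψ₁⟩ = (|00⟩ − |11⟩)/√2. -/
noncomputable def bell1 : Fin 2 × Fin 2 → ℂ := fun p =>
  if p.1 = p.2 then
    (if p.1 = 0 then ((1 / Real.sqrt 2 : ℝ) : ℂ) else -((1 / Real.sqrt 2 : ℝ) : ℂ))
  else 0

/-- |Ψ₂⟩ = (|01⟩ + |10⟩)/√2. -/
noncomputable def bell2 : Fin 2 × Fin 2 → ℂ := fun p =>
  if p.1 = p.2 then 0 else ((1 / Real.sqrt 2 : ℝ) : ℂ)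

/-- |Ψ₃⟩ = (|01⟩ − |10⟩)/√2. -/
noncomputable def bell3 : Fin 2 × Fin 2 → ℂ := fun p =>
  if p.1 = p.2 then 0
  else (if p.1 = 0 then ((1 / Real.sqrt 2 : ℝ) : ℂ) else -((1 / Real.sqrt 2 : ℝ) : ℂ))

/-- The Bell diagonal state Σ_j p_j |Ψ_j⟩⟨Ψ_j|. -/
noncomputable def bellDiag (p₀ p₁ p₂ p₃ : ℝ) : Matrix (Fin 2 × Fin 2) (Fin 2 × Fin 2) ℂ :=
  ((p₀ : ℝ) : ℂ) • outer bell0 + ((p₁ : ℝ) : ℂ) • outer bell1 +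
    ((p₂ : ℝ) : ℂ) • outer bell2 + ((p₃ : ℝ) : ℂ) • outer bell3


private lemma invsq : ((Real.sqrt 2 : ℝ) : ℂ)⁻¹ ^ 2 = 1/2 := by
  have : ((Real.sqrt 2 : ℝ) : ℂ)⁻¹ ^ 2 = ((((Real.sqrt 2)⁻¹ ^ 2 : ℝ)) : ℂ) := by push_cast; ring
  rw [this]
  norm_num [Real.sq_sqrt (by norm_num : (0:ℝ) ≤ 2)]

private lemma bellDiag_apply (p₀ p₁ p₂ p₃ : ℝ) (i j : Fin 2 × Fin 2) :
    bellDiag p₀ p₁ p₂ p₃ i j =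
      if i = (0,0) ∧ j = (0,0) then (((p₀+p₁)/2 : ℝ) : ℂ)
      else if i = (1,1) ∧ j = (1,1) then (((p₀+p₁)/2 : ℝ) : ℂ)
      else if i = (0,0) ∧ j = (1,1) then (((p₀-p₁)/2 : ℝ) : ℂ)
      else if i = (1,1) ∧ j = (0,0) then (((p₀-p₁)/2 : ℝ) : ℂ)
      else if i = (0,1) ∧ j = (0,1) then (((p₂+p₃)/2 : ℝ) : ℂ)
      else if i = (1,0) ∧ j = (1,0) then (((p₂+p₃)/2 : ℝ) : ℂ)
      else if i = (0,1) ∧ j = (1,0) then (((p₂-p₃)/2 : ℝ) : ℂ)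
      else if i = (1,0) ∧ j = (0,1) then (((p₂-p₃)/2 : ℝ) : ℂ)
      else 0 := by
  obtain ⟨⟨i1,hi1⟩,⟨i2,hi2⟩⟩ := i
  obtain ⟨⟨j1,hj1⟩,⟨j2,hj2⟩⟩ := j
  interval_cases i1 <;> interval_cases i2 <;> interval_cases j1 <;> interval_cases j2 <;>
    simp [bellDiag, outer, bell0, bell1, bell2, bell3, Matrix.add_apply, Matrix.smul_apply,
      Prod.ext_iff, map_neg, Complex.conj_ofReal] <;> push_cast <;> ring_nf <;>
    rw [invsq] <;> ring

private lemma overlap_bellDiag (p₀ p₁ p₂ p₃ : ℝ) (φ : Fin 2 × Fin 2 → ℂ) :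
    overlap (bellDiag p₀ p₁ p₂ p₃) φ =
      (p₀+p₁)/2 * (Complex.normSq (φ (0,0)) + Complex.normSq (φ (1,1)))
      + (p₂+p₃)/2 * (Complex.normSq (φ (0,1)) + Complex.normSq (φ (1,0)))
      + (p₀-p₁) * (starRingEnd ℂ (φ (0,0)) * φ (1,1)).re
      + (p₂-p₃) * (starRingEnd ℂ (φ (0,1)) * φ (1,0)).re := by
  simp only [overlap, dotProduct, Matrix.mulVec, Fintype.sum_prod_type,
    Fin.sum_univ_two, Pi.star_apply, bellDiag_apply, Prod.mk.injEq]
  norm_num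
  simp only [Complex.add_re, Complex.mul_re, Complex.ofReal_re, Complex.ofReal_im,
    RCLike.star_def, Complex.conj_re, Complex.conj_im, Complex.normSq_apply]
  ring

private lemma cross_bound (u v w z : ℂ)
    (habs : ‖u‖ * ‖v‖ = ‖w‖ * ‖z‖) :
    2 * (starRingEnd ℂ u * v).re ≤ Complex.normSq w + Complex.normSq z := by
  have h1 : (starRingEnd ℂ u * v).re ≤ ‖u‖ * ‖v‖ := by
    calc (starRingEnd ℂ u * v).re ≤ ‖starRingEnd ℂ u * v‖ := Complex.re_le_norm _
    _ = ‖u‖ * ‖v‖ := by rw [norm_mul, Complex.norm_conj]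
  have h2 : 2 * (‖w‖ * ‖z‖) ≤ ‖w‖ ^ 2 + ‖z‖ ^ 2 := by
    nlinarith [sq_nonneg (‖w‖ - ‖z‖)]
  rw [Complex.normSq_eq_norm_sq, Complex.normSq_eq_norm_sq]
  nlinarith

private lemma unit_normSq (a : Fin 2 → ℂ) (ha : IsUnitVec a) :
    Complex.normSq (a 0) + Complex.normSq (a 1) = 1 := by
  simpa [IsUnitVec, Fin.sum_univ_two, Complex.normSq_eq_norm_sq] using ha

private lemma overlap_le (p₀ p₁ p₂ p₃ : ℝ) (h01 : p₁ ≤ p₀) (h12 : p₂ ≤ p₁) (h23 : p₃ ≤ p₂)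
    (h3 : 0 ≤ p₃) (hsum : p₀ + p₁ + p₂ + p₃ = 1)
    (a b : Fin 2 → ℂ) (ha : IsUnitVec a) (hb : IsUnitVec b) :
    overlap (bellDiag p₀ p₁ p₂ p₃) (biProd a b) ≤ (p₀ + p₁) / 2 := by
  rw [overlap_bellDiag]
  have hφ : ∀ i j : Fin 2, biProd a b (i, j) = a i * b j := fun i j => rfl
  simp only [hφ]
  set u := a 0 * b 0 with hu; set v := a 1 * b 1 with hv
  set w := a 0 * b 1 with hw; set z := a 1 * b 0 with hz
  have ha' := unit_normSq a ha
  have hb' := unit_normSq b hb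
  have hs : Complex.normSq u + Complex.normSq v + (Complex.normSq w + Complex.normSq z) = 1 := by
    simp only [u, v, w, z, Complex.normSq_mul]
    nlinarith
  have habs : ‖u‖ * ‖v‖ = ‖w‖ * ‖z‖ := by
    simp only [u, v, w, z, norm_mul]; ring
  have hc1 := cross_bound u v w z habs
  have hc2 := cross_bound w z w z rfl
  have hn : 0 ≤ Complex.normSq u + Complex.normSq v := add_nonneg (Complex.normSq_nonneg _) (Complex.normSq_nonneg _)
  have hn2 : 0 ≤ Complex.normSq w + Complex.normSq z := add_nonneg (Complex.normSq_nonneg _) (Complex.normSq_nonneg _)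
  nlinarith [mul_nonneg (sub_nonneg.mpr h12) hn2,
    mul_le_mul_of_nonneg_left hc1 (sub_nonneg.mpr h01),
    mul_le_mul_of_nonneg_left hc2 (sub_nonneg.mpr h23)]

private lemma unit_basis : IsUnitVec (basisVec (0 : Fin 2)) := by
  simp [IsUnitVec, basisVec, Fin.sum_univ_two]

private lemma overlap_at00 (p₀ p₁ p₂ p₃ : ℝ) :
    overlap (bellDiag p₀ p₁ p₂ p₃) (biProd (basisVec (0 : Fin 2)) (basisVec (0 : Fin 2)))
      = (p₀ + p₁) / 2 := by
  rw [overlap_bellDiag]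
  simp [biProd, basisVec]

/-- **Geometric measure of two-qubit Bell diagonal states.** For p₀ ≥ p₁ ≥ p₂ ≥ p₃ ≥ 0
summing to 1, Λ²(ρ) = (p₀ + p₁)/2, i.e. G(ρ) = 1 − log₂(p₀ + p₁), and the maximum is
attained at the product vector |00⟩. -/
theorem gm_bellDiag (p₀ p₁ p₂ p₃ : ℝ) (h01 : p₁ ≤ p₀) (h12 : p₂ ≤ p₁) (h23 : p₃ ≤ p₂)
    (h3 : 0 ≤ p₃) (hsum : p₀ + p₁ + p₂ + p₃ = 1) :
    biMaxOverlap (bellDiag p₀ p₁ p₂ p₃) = (p₀ + p₁) / 2 ∧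
    overlap (bellDiag p₀ p₁ p₂ p₃) (biProd (basisVec (0 : Fin 2)) (basisVec (0 : Fin 2)))
      = (p₀ + p₁) / 2 ∧
    biGm (bellDiag p₀ p₁ p₂ p₃) = 1 - Real.logb 2 (p₀ + p₁) := by
  have hat := overlap_at00 p₀ p₁ p₂ p₃
  have hp0 : 0 < p₀ + p₁ := by nlinarith
  set S := {r : ℝ | ∃ (a : Fin 2 → ℂ) (b : Fin 2 → ℂ), IsUnitVec a ∧ IsUnitVec b ∧
    r = overlap (bellDiag p₀ p₁ p₂ p₃) (biProd a b)} with hS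
  have hmem : (p₀ + p₁) / 2 ∈ S :=
    ⟨basisVec 0, basisVec 0, unit_basis, unit_basis, hat.symm⟩
  have hub : ∀ r ∈ S, r ≤ (p₀ + p₁) / 2 := by
    rintro r ⟨a, b, ha, hb, rfl⟩
    exact overlap_le p₀ p₁ p₂ p₃ h01 h12 h23 h3 hsum a b ha hb
  have hsup : biMaxOverlap (bellDiag p₀ p₁ p₂ p₃) = (p₀ + p₁) / 2 := by
    refine le_antisymm (csSup_le ⟨_, hmem⟩ hub) (le_csSup ⟨(p₀ + p₁) / 2, hub⟩ hmem)
  refine ⟨hsup, hat, ?_⟩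
  rw [biGm, hsup, Real.logb_div (ne_of_gt hp0) (by norm_num)]
  simp [Real.logb_self_eq_one]

end Paper
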